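/- If the network is not asymmetric, i.e. E_{M,D} ≠ ℝ^n, then there exist a real number α ≥ 1 and a nonzero vector z ∈ ℝ^N such that Γ z = α z and z_i = 0 for every i ∈ D. -/

import Mathlib

/-!
If `E_{M,D} ≠ ℝⁿ`, some `w ≠ 0` is orthogonal to every `M ^ k e_{N+i}` (`i ∈ D`), i.e. the
`inr`-coordinates of `Mᵀ ^ k w` vanish on `D` for all `k`: `w` lies in the unobservable subspace
of `Mᵀ`. On that subspace the damping `I_D` acts trivially, so `Mᵀ` maps `(x, y)` to `(-Γ y, x)`;
hence both components of `w` lie in the unobservable subspace of `(Γ, D)`, a `Γ`-invariant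
subspace which is therefore nonzero. Being symmetric, `Γ` has a real eigenvector `z` in it; `z`
vanishes on `D`, and its eigenvalue is at least `1` since `Γ - 1` is the positive semidefinite
graph Laplacian.
-/

open Matrix
open scoped ComplexOrder

namespace Matrix

theorem exists_ne_zero_forall_dotProduct_eq_zero {K ι : Type*} [Field K] [Fintype ι]
    [DecidableEq ι] {s : Set (ι → K)} (hs : Submodule.span K s ≠ ⊤) :
    ∃ w ≠ 0, ∀ v ∈ s, w ⬝ᵥ v = 0 := by
  obtain ⟨φ, hφ, hker⟩ := (Submodule.span K s).exists_le_ker_of_lt_top hs.lt_top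
  refine ⟨(dotProductEquiv K ι).symm φ, by simpa using hφ, fun v hv => ?_⟩
  have h := hker (Submodule.subset_span hv)
  rwa [LinearMap.mem_ker, ← LinearEquiv.apply_symm_apply (dotProductEquiv K ι) φ] at h

theorem PosSemidef.nonneg_of_mulVec_eq_smul {𝕜 ι : Type*} [RCLike 𝕜] [Fintype ι]
    {L : Matrix ι ι 𝕜} (hL : L.PosSemidef) {z : ι → 𝕜} (hz : z ≠ 0) {μ : 𝕜}
    (h : L *ᵥ z = μ • z) : 0 ≤ μ := by
  have h1 := hL.dotProduct_mulVec_nonneg z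
  rw [h, dotProduct_smul, smul_eq_mul] at h1
  have hz' : 0 < star z ⬝ᵥ z := dotProduct_star_self_pos_iff.mpr hz
  simpa [hz'.ne'] using mul_nonneg h1 (RCLike.inv_pos.mpr hz').le

theorem IsHermitian.exists_mulVec_eq_smul_mem {𝕜 ι : Type*} [RCLike 𝕜] [Fintype ι]
    [DecidableEq ι] {A : Matrix ι ι 𝕜} (hA : A.IsHermitian) {p : Submodule 𝕜 (ι → 𝕜)}
    (hp : p ≠ ⊥) (hAp : ∀ v ∈ p, A *ᵥ v ∈ p) :
    ∃ μ : ℝ, ∃ z ∈ p, z ≠ 0 ∧ A *ᵥ z = (μ : 𝕜) • z := by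
  let e := WithLp.linearEquiv 2 𝕜 (ι → 𝕜)
  let q := p.comap e.toLinearMap
  have hq : ∀ v ∈ q, A.toEuclideanLin v ∈ q := fun v hv => hAp _ hv
  have : Nontrivial q := by
    rw [Submodule.nontrivial_iff_ne_bot]
    simpa [q, Submodule.comap_equiv_eq_map_symm] using hp
  obtain ⟨μ, hμ⟩ : ∃ μ : ℝ, Module.End.HasEigenvalue (A.toEuclideanLin.restrict hq) μ :=
    ⟨_, ((isSymmetric_toEuclideanLin_iff.mpr hA).restrict_invariant
      hq).hasEigenvalue_iSup_of_finiteDimensional⟩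
  obtain ⟨v, hv⟩ := hμ.exists_hasEigenvector
  refine ⟨μ, e v, v.2, ?_, ?_⟩
  · simpa [e] using hv.2
  · simpa [e] using congrArg (fun x : q => e x) hv.apply_eq_smul

section Unobservable

variable {R ι : Type*} [CommRing R] [Fintype ι] [DecidableEq ι]

def unobservableSubspace (A : Matrix ι ι R) (D : Finset ι) : Submodule R (ι → R) where
  carrier := {v | ∀ k : ℕ, ∀ i ∈ D, (A ^ k *ᵥ v) i = 0}
  add_mem' hv hw k i hi := by simp [mulVec_add, hv k i hi, hw k i hi]
  zero_mem' := by simp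
  smul_mem' c v hv k i hi := by simp [mulVec_smul, hv k i hi]

variable {A : Matrix ι ι R} {D : Finset ι} {v : ι → R}

theorem mem_unobservableSubspace :
    v ∈ unobservableSubspace A D ↔ ∀ k : ℕ, ∀ i ∈ D, (A ^ k *ᵥ v) i = 0 := Iff.rfl

theorem apply_eq_zero_of_mem_unobservableSubspace (hv : v ∈ unobservableSubspace A D) {i : ι}
    (hi : i ∈ D) : v i = 0 := by
  simpa using hv 0 i hi

theorem mulVec_mem_unobservableSubspace (hv : v ∈ unobservableSubspace A D) :
    A *ᵥ v ∈ unobservableSubspace A D := fun k i hi => by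
  rw [mulVec_mulVec, ← pow_succ]
  exact hv (k + 1) i hi

variable {Γ : Matrix ι ι R} {d : ι → R} {w : ι ⊕ ι → R}

theorem fromBlocks_mulVec_of_mem_unobservableSubspace (hd : ∀ i ∉ D, d i = 0)
    (hw : w ∈ unobservableSubspace (fromBlocks 0 (-Γ) 1 (-diagonal d)) (D.map .inr)) :
    fromBlocks 0 (-Γ) 1 (-diagonal d) *ᵥ w = Sum.elim (-(Γ *ᵥ (w ∘ .inr))) (w ∘ .inl) := by
  have hdw : diagonal d *ᵥ (w ∘ .inr) = 0 := by
    funext i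
    rw [mulVec_diagonal, Pi.zero_apply]
    by_cases hi : i ∈ D
    · exact mul_eq_zero_of_right _
        (apply_eq_zero_of_mem_unobservableSubspace hw (Finset.mem_map_of_mem _ hi))
    · rw [hd i hi, zero_mul]
  rw [fromBlocks_mulVec, neg_mulVec, neg_mulVec, hdw]
  simp

theorem comp_inr_mem_unobservableSubspace (hd : ∀ i ∉ D, d i = 0)
    (hw : w ∈ unobservableSubspace (fromBlocks 0 (-Γ) 1 (-diagonal d)) (D.map .inr)) :
    w ∘ .inr ∈ unobservableSubspace Γ D := by
  intro k
  induction k generalizing w with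
  | zero =>
    intro i hi
    simpa using apply_eq_zero_of_mem_unobservableSubspace hw (Finset.mem_map_of_mem _ hi)
  | succ k ih =>
    intro i hi
    -- on the unobservable subspace the square of the block matrix acts on `w ∘ .inr` as `-Γ`
    have := ih (mulVec_mem_unobservableSubspace (mulVec_mem_unobservableSubspace hw)) i hi
    rw [fromBlocks_mulVec_of_mem_unobservableSubspace hd (mulVec_mem_unobservableSubspace hw),
      fromBlocks_mulVec_of_mem_unobservableSubspace hd hw] at this
    simpa [pow_succ, ← mulVec_mulVec, mulVec_neg] using this

theorem comp_inl_mem_unobservableSubspace (hd : ∀ i ∉ D, d i = 0)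
    (hw : w ∈ unobservableSubspace (fromBlocks 0 (-Γ) 1 (-diagonal d)) (D.map .inr)) :
    w ∘ .inl ∈ unobservableSubspace Γ D := by
  have h := comp_inr_mem_unobservableSubspace hd (mulVec_mem_unobservableSubspace hw)
  rwa [fromBlocks_mulVec_of_mem_unobservableSubspace hd hw] at h

theorem unobservableSubspace_ne_bot_of_fromBlocks (hd : ∀ i ∉ D, d i = 0)
    (h : unobservableSubspace (fromBlocks 0 (-Γ) 1 (-diagonal d)) (D.map .inr) ≠ ⊥) :
    unobservableSubspace Γ D ≠ ⊥ := by
  obtain ⟨w, hw, hw0⟩ := Submodule.ne_bot_iff _ |>.mp h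
  intro hbot
  have hl := comp_inl_mem_unobservableSubspace hd hw
  have hr := comp_inr_mem_unobservableSubspace hd hw
  rw [hbot, Submodule.mem_bot] at hl hr
  exact hw0 (by rw [← Sum.elim_comp_inl_inr w, hl, hr, Sum.elim_zero_zero])

end Unobservable

end Matrix

theorem stmt4_general (N : ℕ) (G : SimpleGraph (Fin N)) [DecidableRel G.Adj]
    (D : Finset (Fin N))
    (Γ : Matrix (Fin N) (Fin N) ℝ)
    (hΓ : Γ = 1 + (Matrix.diagonal (fun i => (G.degree i : ℝ)) - G.adjMatrix ℝ))
    (ID : Matrix (Fin N) (Fin N) ℝ)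
    (hID : ID = Matrix.diagonal (fun i => if i ∈ D then (1 : ℝ) else 0))
    (M : Matrix (Fin N ⊕ Fin N) (Fin N ⊕ Fin N) ℝ)
    (hM : M = Matrix.fromBlocks 0 1 (-Γ) (-ID))
    (hnotasym : Submodule.span ℝ
      {v : (Fin N ⊕ Fin N) → ℝ | ∃ i ∈ D, ∃ k : ℕ, v = (M ^ k).mulVec (Pi.single (Sum.inr i) 1)}
      ≠ ⊤) :
    ∃ α : ℝ, 1 ≤ α ∧ ∃ z : Fin N → ℝ, z ≠ 0 ∧ Γ.mulVec z = α • z ∧ ∀ i ∈ D, z i = 0 := by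
  have hΓL : Γ = 1 + G.lapMatrix ℝ := hΓ
  have hΓH : Γ.IsHermitian := hΓL ▸ isHermitian_one.add (G.isHermitian_lapMatrix ℝ)
  have hMT : Mᵀ = fromBlocks 0 (-Γ) 1 (-diagonal fun i => if i ∈ D then 1 else 0) := by
    rw [hM, hID, fromBlocks_transpose, transpose_neg, (isHermitian_iff_isSymm.mp hΓH).eq]
    simp
  obtain ⟨w, hw0, hw⟩ := exists_ne_zero_forall_dotProduct_eq_zero hnotasym
  have hwU : w ∈ unobservableSubspace Mᵀ (D.map .inr) := by
    refine mem_unobservableSubspace.mpr fun k j hj => ?_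
    obtain ⟨i, hi, rfl⟩ := Finset.mem_map.mp hj
    have h := hw _ ⟨i, hi, k, rfl⟩
    rwa [dotProduct_mulVec, dotProduct_single, mul_one, ← mulVec_transpose, transpose_pow] at h
  rw [hMT] at hwU
  have hU := unobservableSubspace_ne_bot_of_fromBlocks (fun i hi => if_neg hi)
    ((Submodule.ne_bot_iff _).mpr ⟨w, hwU, hw0⟩)
  obtain ⟨α, z, hzU, hz0, hΓz⟩ :=
    hΓH.exists_mulVec_eq_smul_mem hU fun _ => mulVec_mem_unobservableSubspace
  replace hΓz : Γ *ᵥ z = α • z := hΓz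
  have hLz : G.lapMatrix ℝ *ᵥ z = (α - 1) • z := by
    rw [hΓL, add_mulVec, one_mulVec] at hΓz
    rw [sub_smul, one_smul, ← hΓz, add_sub_cancel_left]
  have hα := (G.posSemidef_lapMatrix ℝ).nonneg_of_mulVec_eq_smul hz0 hLz
  exact ⟨α, by linarith, z, hz0, hΓz, fun _ => apply_eq_zero_of_mem_unobservableSubspace hzU⟩

/-- If the network is not asymmetric, then `Γ` has an eigenvector `z ≠ 0`
with eigenvalue `α ≥ 1` vanishing on all damped vertices. -/
theorem stmt4 (N : ℕ) (hN : 0 < N) (G : SimpleGraph (Fin N)) [DecidableRel G.Adj]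
    (hG : G.Connected)
    (D : Finset (Fin N)) (hD : D.Nonempty)
    (Γ : Matrix (Fin N) (Fin N) ℝ)
    (hΓ : Γ = 1 + (Matrix.diagonal (fun i => (G.degree i : ℝ)) - G.adjMatrix ℝ))
    (ID : Matrix (Fin N) (Fin N) ℝ)
    (hID : ID = Matrix.diagonal (fun i => if i ∈ D then (1 : ℝ) else 0))
    (M : Matrix (Fin N ⊕ Fin N) (Fin N ⊕ Fin N) ℝ)
    (hM : M = Matrix.fromBlocks 0 1 (-Γ) (-ID))
    (hnotasym : Submodule.span ℝ
      {v : (Fin N ⊕ Fin N) → ℝ | ∃ i ∈ D, ∃ k : ℕ, v = (M ^ k).mulVec (Pi.single (Sum.inr i) 1)}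
      ≠ ⊤) :
    ∃ α : ℝ, 1 ≤ α ∧ ∃ z : Fin N → ℝ, z ≠ 0 ∧ Γ.mulVec z = α • z ∧ ∀ i ∈ D, z i = 0 :=
  stmt4_general N G D Γ hΓ ID hID M hM hnotasym
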